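/- arXiv:1511.02150 — 2 statements merged into one kernel-verified Lean document; each statement's English description precedes it below -/
import Mathlib

section
/- Let Q denote the standard Gaussian tail function. Then Q((log(1 − Q(t)) − log(Q(t)) − 2t²)/(2t)) tends to 1 as t → +∞. (This is Proposition 2, part 2: writing P_e = Q(t), μ = 2t², σ = 2t, the probability P'_r = Q((log(1 − P_e) − log(P_e) − μ)/σ) that the path does not split and the bit is correctly decoded tends to 1 as P_e → 0⁺.) -/
/-!
Since `0 < Q ≤ 1`, the term `log (1 - Q t)` is nonpositive, and the crude bound
`Q t ≥ ∫_t^{t+1} e^{-s²/2} ds / √(2π) ≥ e^{-t²}` (for `t ≥ 4`) gives `-log (Q t) ≤ t²`.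
Hence the argument of `Q` is at most `-t²/(2t) = -t/2 → -∞`, and `Q x → 1` as `x → -∞`
by monotone convergence of `∫_{(x,∞)} e^{-s²/2} ds` to `√(2π)`.
-/

open Real Filter Topology

/-- The standard Gaussian tail function `Q(x) = (1/√(2π)) ∫_x^∞ e^{−t²/2} dt`. -/
noncomputable def gaussQ (x : ℝ) : ℝ :=
  (1 / Real.sqrt (2 * Real.pi)) * ∫ t in Set.Ioi x, Real.exp (-t ^ 2 / 2)

open MeasureTheory Set

lemma integrable_exp_neg_sq_div_two : Integrable fun t : ℝ => exp (-t ^ 2 / 2) := by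
  simpa [neg_div, div_eq_inv_mul] using integrable_exp_neg_mul_sq (by norm_num : (0 : ℝ) < 1 / 2)

lemma integral_exp_neg_sq_div_two : ∫ t : ℝ, exp (-t ^ 2 / 2) = √(2 * π) := by
  have h := integral_gaussian (1 / 2)
  rw [show π / (1 / 2) = 2 * π by ring] at h
  simpa [neg_div, div_eq_inv_mul] using h

lemma gaussQ_le_one (x : ℝ) : gaussQ x ≤ 1 := by
  have hpos : 0 < √(2 * π) := by positivity
  have h : ∫ t in Ioi x, exp (-t ^ 2 / 2) ≤ √(2 * π) :=
    integral_exp_neg_sq_div_two ▸ setIntegral_le_integral integrable_exp_neg_sq_div_two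
      (.of_forall fun t => (exp_pos _).le)
  rwa [gaussQ, one_div_mul_eq_div, div_le_one hpos]

lemma tendsto_gaussQ_atBot : Tendsto gaussQ atBot (𝓝 1) := by
  have h : Tendsto (fun x : ℝ => ∫ t in Ioi x, exp (-t ^ 2 / 2)) atBot (𝓝 (√(2 * π))) := by
    have := tendsto_setIntegral_of_monotone (ι := ℝᵒᵈ) (s := fun x => Ioi (OrderDual.ofDual x))
      (fun _ => measurableSet_Ioi) (fun _ _ hxy => Ioi_subset_Ioi hxy)
      integrable_exp_neg_sq_div_two.integrableOn
    have hU : ⋃ x : ℝᵒᵈ, Ioi (OrderDual.ofDual x) = univ := iUnion_Ioi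
    rwa [hU, setIntegral_univ, integral_exp_neg_sq_div_two] at this
  have hne : √(2 * π) ≠ 0 := by positivity
  have := h.const_mul (1 / √(2 * π))
  rwa [one_div_mul_cancel hne] at this

lemma exp_neg_add_one_sq_div_two_le_gaussQ {t : ℝ} (ht : 0 ≤ t) :
    exp (-(t + 1) ^ 2 / 2) / √(2 * π) ≤ gaussQ t := by
  have hIoc : exp (-(t + 1) ^ 2 / 2) ≤ ∫ s in Ioc t (t + 1), exp (-s ^ 2 / 2) := by
    have hconst : ∫ _ in Ioc t (t + 1), exp (-(t + 1) ^ 2 / 2) = exp (-(t + 1) ^ 2 / 2) := by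
      simp [measureReal_def]
    refine hconst ▸ setIntegral_mono_on (integrableOn_const (by simp))
      integrable_exp_neg_sq_div_two.integrableOn measurableSet_Ioc fun s hs => ?_
    have : s ^ 2 ≤ (t + 1) ^ 2 := pow_le_pow_left₀ (ht.trans hs.1.le) hs.2 2
    gcongr
  have hIoi : ∫ s in Ioc t (t + 1), exp (-s ^ 2 / 2) ≤ ∫ s in Ioi t, exp (-s ^ 2 / 2) :=
    setIntegral_mono_set integrable_exp_neg_sq_div_two.integrableOn
      (.of_forall fun s => (exp_pos _).le) Ioc_subset_Ioi_self.eventuallyLE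
  rw [gaussQ, one_div_mul_eq_div]
  gcongr
  exact hIoc.trans hIoi

lemma exp_neg_sq_le_gaussQ {t : ℝ} (ht : 4 ≤ t) : exp (-t ^ 2) ≤ gaussQ t := by
  refine le_trans ?_ (exp_neg_add_one_sq_div_two_le_gaussQ (by linarith))
  have hsqrt : √(2 * π) ≤ 3 := sqrt_le_iff.2 ⟨by norm_num, by nlinarith [pi_le_four]⟩
  have hexp : 3 ≤ exp ((t ^ 2 - 2 * t - 1) / 2) := by
    nlinarith [add_one_le_exp ((t ^ 2 - 2 * t - 1) / 2)]
  rw [le_div_iff₀ (by positivity)]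
  calc exp (-t ^ 2) * √(2 * π) ≤ exp (-t ^ 2) * exp ((t ^ 2 - 2 * t - 1) / 2) := by
        gcongr; linarith
    _ = exp (-(t + 1) ^ 2 / 2) := by rw [← exp_add]; ring_nf

/-- Proposition 2, part 2: with `P_e = Q(t)`, `μ = 2t²`, `σ = 2t`,
`Q((log(1 − P_e) − log(P_e) − μ)/σ) → 1` as `t → +∞`. -/
theorem gaussQ_correct_prob_tendsto_one :
    Tendsto (fun t : ℝ =>
        gaussQ ((Real.log (1 - gaussQ t) - Real.log (gaussQ t) - 2 * t ^ 2) / (2 * t)))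
      atTop (𝓝 1) := by
  have hbound : ∀ᶠ t in atTop,
      (log (1 - gaussQ t) - log (gaussQ t) - 2 * t ^ 2) / (2 * t) ≤ -(t / 2) := by
    filter_upwards [eventually_ge_atTop 4] with t ht
    have hQ := exp_neg_sq_le_gaussQ ht
    have hlog_one_sub : log (1 - gaussQ t) ≤ 0 :=
      log_nonpos (by linarith [gaussQ_le_one t]) (by linarith [(exp_pos (-t ^ 2)).trans_le hQ])
    have hlog : -t ^ 2 ≤ log (gaussQ t) := by simpa using log_le_log (exp_pos _) hQ
    rw [div_le_iff₀ (by positivity)]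
    nlinarith
  have hlin : Tendsto (fun t : ℝ => -(t / 2)) atTop atBot :=
    tendsto_neg_atTop_atBot.comp (tendsto_id.atTop_div_const two_pos)
  exact tendsto_gaussQ_atBot.comp (tendsto_atBot_mono' atTop hbound hlin)
end

section
/- Let Q denote the standard Gaussian tail function. Then t · (log(1/Q(t) − 1)/(2t²) − 1) tends to −∞ as t → +∞. -/
open Real Filter Topology

open MeasureTheory

lemma gfun_eq : (fun t : ℝ => Real.exp (-t ^ 2 / 2)) = fun t => Real.exp (-(1/2) * t ^ 2) := by
  ext t; ring_nf

lemma gint : Integrable (fun t : ℝ => Real.exp (-t ^ 2 / 2)) := by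
  rw [gfun_eq]; exact integrable_exp_neg_mul_sq (by norm_num)

lemma gaussQ_lower {x : ℝ} (hx : 0 ≤ x) :
    Real.exp (-(x+1) ^ 2 / 2) / Real.sqrt (2 * Real.pi) ≤ gaussQ x := by
  have h1 : ∫ t in Set.Ioc x (x+1), Real.exp (-(x+1) ^ 2 / 2) ≤
      ∫ t in Set.Ioc x (x+1), Real.exp (-t ^ 2 / 2) := by
    apply setIntegral_mono_on (integrable_const _) (gint.integrableOn) measurableSet_Ioc
    intro t ht
    apply Real.exp_le_exp.mpr
    have : t ^ 2 ≤ (x+1) ^ 2 := by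
      apply sq_le_sq' <;> nlinarith [ht.1, ht.2]
    linarith
  have h2 : ∫ t in Set.Ioc x (x+1), Real.exp (-t ^ 2 / 2) ≤
      ∫ t in Set.Ioi x, Real.exp (-t ^ 2 / 2) := by
    apply setIntegral_mono_set gint.integrableOn
    · filter_upwards with t using Real.exp_nonneg _
    · filter_upwards with t ht using ht.1
  have h3 : ∫ t in Set.Ioc x (x+1), (Real.exp (-(x+1) ^ 2 / 2) : ℝ) =
      Real.exp (-(x+1) ^ 2 / 2) := by
    rw [setIntegral_const]
    simp [Real.volume_Ioc]
  have hs : 0 < Real.sqrt (2 * Real.pi) := Real.sqrt_pos.mpr (by positivity)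
  unfold gaussQ
  rw [div_eq_mul_inv, mul_comm, ← one_div]
  apply mul_le_mul_of_nonneg_left _ (by positivity)
  linarith [h1, h2, h3.symm.le]

lemma gaussQ_pos {x : ℝ} (hx : 0 ≤ x) : 0 < gaussQ x := by
  have := gaussQ_lower hx
  have : 0 < Real.exp (-(x+1) ^ 2 / 2) / Real.sqrt (2 * Real.pi) := by positivity
  linarith [gaussQ_lower hx]

lemma gaussQ_lt_one {x : ℝ} (hx : 0 ≤ x) : gaussQ x < 1 := by
  have h2 : ∫ t in Set.Ioi x, Real.exp (-t ^ 2 / 2) ≤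
      ∫ t in Set.Ioi 0, Real.exp (-t ^ 2 / 2) := by
    apply setIntegral_mono_set gint.integrableOn
    · filter_upwards with t using Real.exp_nonneg _
    · filter_upwards with t ht using lt_of_le_of_lt hx ht
  have h3 : ∫ t in Set.Ioi (0:ℝ), Real.exp (-t ^ 2 / 2) = Real.sqrt (π / (1/2)) / 2 := by
    rw [gfun_eq]; exact integral_gaussian_Ioi (1/2)
  have hs : 0 < Real.sqrt (2 * Real.pi) := Real.sqrt_pos.mpr (by positivity)
  have key : gaussQ x ≤ 1/2 := by
    unfold gaussQ
    rw [one_div, ← div_eq_inv_mul, div_le_iff₀ hs]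
    have : Real.sqrt (π / (1/2)) = Real.sqrt (2 * π) := by norm_num [mul_comm]
    rw [this] at h3
    linarith [h2, h3.le]
  linarith

/-- `t · (log(1/Q(t) − 1)/(2t²) − 1) → −∞` as `t → +∞`. -/
theorem t_mul_log_inv_gaussQ_tendsto_atBot :
    Tendsto (fun t : ℝ => t * (Real.log (1 / gaussQ t - 1) / (2 * t ^ 2) - 1))
      atTop atBot := by
  have hv : Tendsto (fun t : ℝ => -(t/2)) atTop atBot := by
    rw [tendsto_neg_atBot_iff]
    exact tendsto_id.atTop_div_const (by norm_num)
  apply tendsto_atBot_mono' atTop _ hv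
  filter_upwards [eventually_ge_atTop (4:ℝ)] with t ht
  have ht0 : (0:ℝ) ≤ t := by linarith
  have hQpos := gaussQ_pos ht0
  have hQlt := gaussQ_lt_one ht0
  have hinv : 1 < 1 / gaussQ t := by rw [lt_div_iff₀ hQpos]; linarith
  have harg : 0 < 1 / gaussQ t - 1 := by linarith
  have hs : 0 < Real.sqrt (2 * Real.pi) := Real.sqrt_pos.mpr (by positivity)
  have hlogs : Real.log (Real.sqrt (2 * Real.pi)) ≤ 2 := by
    have h3 : Real.sqrt (2 * Real.pi) ≤ 3 := by
      rw [show (3:ℝ) = Real.sqrt 9 by rw [show (9:ℝ) = 3^2 by norm_num, Real.sqrt_sq]; norm_num]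
      exact Real.sqrt_le_sqrt (by nlinarith [Real.pi_lt_d2])
    calc Real.log (Real.sqrt (2 * Real.pi)) ≤ Real.sqrt (2 * Real.pi) - 1 :=
          Real.log_le_sub_one_of_pos hs
      _ ≤ 2 := by linarith
  have hlogQ : -Real.log (gaussQ t) ≤ (t+1)^2/2 + Real.log (Real.sqrt (2 * Real.pi)) := by
    have hl := gaussQ_lower ht0
    have := Real.log_le_log (by positivity) hl
    rw [Real.log_div (Real.exp_ne_zero _) (ne_of_gt hs), Real.log_exp] at this
    linarith
  have hlog : Real.log (1 / gaussQ t - 1) ≤ t ^ 2 := by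
    calc Real.log (1 / gaussQ t - 1) ≤ Real.log (1 / gaussQ t) :=
          Real.log_le_log harg (by linarith)
      _ = -Real.log (gaussQ t) := by rw [one_div, Real.log_inv]
      _ ≤ (t+1)^2/2 + 2 := by linarith
      _ ≤ t ^ 2 := by nlinarith
  have h2t : (0:ℝ) < 2 * t ^ 2 := by positivity
  have hdiv : Real.log (1 / gaussQ t - 1) / (2 * t ^ 2) ≤ 1/2 := by
    rw [div_le_iff₀ h2t]; linarith
  calc t * (Real.log (1 / gaussQ t - 1) / (2 * t ^ 2) - 1) ≤ t * (-(1/2)) := by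
        apply mul_le_mul_of_nonneg_left _ ht0; linarith
    _ = -(t/2) := by ring
end
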